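/- arXiv:2209.00847 — 2 statements merged into one kernel-verified Lean document; each statement's English description precedes it below -/
import Mathlib

section
/- Let p > 1, and for τ ∈ (0,1) define g(τ) = (1 - τ^{1-p})/(1 - τ). Then for every A > 0 and every τ ∈ (0,1), one has (1-τ)^p · (g(τ) + A) ≤ (A - (p-1)) · (log(1/τ))^p. -/
/-!
Write `τ = exp (-L)` with `L = log (1/τ) > 0` and `q = p - 1`. Since `sinh y ≥ y`, we have
`1 - e^{-L} ≥ L e^{-L/2}` and `e^{qL} - 1 ≥ qL e^{qL/2}`; raising the first to the power `q` and
multiplying, the exponentials cancel and `(1 - τ)^q (τ^{-q} - 1) ≥ q L^{q+1}`. Together with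
`1 - τ ≤ L` for the `A`-term this gives the inequality.
-/

open Real

namespace Real

lemma le_exp_half_sub_exp_neg_half {x : ℝ} (hx : 0 ≤ x) :
    x ≤ exp (x / 2) - exp (-(x / 2)) := by
  have h := self_le_sinh_iff.mpr (by linarith : 0 ≤ x / 2)
  rw [sinh_eq] at h
  linarith

lemma mul_exp_neg_half_le_one_sub_exp_neg {x : ℝ} (hx : 0 ≤ x) :
    x * exp (-(x / 2)) ≤ 1 - exp (-x) := by
  have h := mul_le_mul_of_nonneg_right (le_exp_half_sub_exp_neg_half hx) (exp_pos (-(x / 2))).le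
  calc x * exp (-(x / 2)) ≤ (exp (x / 2) - exp (-(x / 2))) * exp (-(x / 2)) := h
    _ = 1 - exp (-x) := by rw [sub_mul, ← exp_add, ← exp_add, add_neg_cancel, exp_zero]; ring_nf

lemma mul_exp_half_le_exp_sub_one {x : ℝ} (hx : 0 ≤ x) : x * exp (x / 2) ≤ exp x - 1 := by
  have h := mul_le_mul_of_nonneg_right (le_exp_half_sub_exp_neg_half hx) (exp_pos (x / 2)).le
  calc x * exp (x / 2) ≤ (exp (x / 2) - exp (-(x / 2))) * exp (x / 2) := h
    _ = exp x - 1 := by rw [sub_mul, ← exp_add, ← exp_add, add_halves, neg_add_cancel, exp_zero]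

lemma mul_rpow_add_one_le_one_sub_exp_neg_rpow_mul_exp_mul_sub_one {q L : ℝ} (hq : 0 ≤ q)
    (hL : 0 ≤ L) :
    q * L ^ (q + 1) ≤ (1 - exp (-L)) ^ q * (exp (q * L) - 1) := by
  have hfirst : L ^ q * exp (-(q * L / 2)) ≤ (1 - exp (-L)) ^ q := by
    calc L ^ q * exp (-(q * L / 2)) = (L * exp (-(L / 2))) ^ q := by
          rw [mul_rpow hL (exp_pos _).le, ← exp_mul]; ring_nf
      _ ≤ (1 - exp (-L)) ^ q :=
          rpow_le_rpow (by positivity) (mul_exp_neg_half_le_one_sub_exp_neg hL) hq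
  have hbase : 0 ≤ 1 - exp (-L) := by linarith [exp_le_one_iff.mpr (neg_nonpos.mpr hL)]
  have hsecond : q * L * exp (q * L / 2) ≤ exp (q * L) - 1 :=
    mul_exp_half_le_exp_sub_one (mul_nonneg hq hL)
  calc q * L ^ (q + 1)
      = (L ^ q * exp (-(q * L / 2))) * (q * L * exp (q * L / 2)) := by
        rw [rpow_add_one' hL (by linarith), mul_mul_mul_comm, ← exp_add, neg_add_cancel,
          exp_zero]
        ring
    _ ≤ (1 - exp (-L)) ^ q * (exp (q * L) - 1) :=
        mul_le_mul hfirst hsecond (by positivity) (rpow_nonneg hbase q)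

end Real

theorem stmt_4 (p : ℝ) (hp : 1 < p) (A : ℝ) (hA : 0 < A)
    (τ : ℝ) (hτ : τ ∈ Set.Ioo (0:ℝ) 1) :
    (1 - τ) ^ p * ((1 - τ ^ (1 - p)) / (1 - τ) + A)
      ≤ (A - (p - 1)) * (Real.log (1 / τ)) ^ p := by
  obtain ⟨hτ0, hτ1⟩ := hτ
  set L := Real.log (1 / τ)
  have hL : 0 < L := log_pos (one_lt_one_div hτ0 hτ1)
  have hτL : τ = exp (-L) := by rw [show L = -log τ by simp [L], neg_neg, exp_log hτ0]
  have hτpow : τ ^ (1 - p) = exp ((p - 1) * L) := by rw [hτL, ← exp_mul]; ring_nf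
  have h1τ : 0 < 1 - τ := by linarith
  have h1τL : 1 - τ ≤ L := by linarith [hτL ▸ add_one_le_exp (-L)]
  have hmain :=
    mul_rpow_add_one_le_one_sub_exp_neg_rpow_mul_exp_mul_sub_one (by linarith : 0 ≤ p - 1) hL.le
  rw [← hτL, ← hτpow, sub_add_cancel] at hmain
  calc (1 - τ) ^ p * ((1 - τ ^ (1 - p)) / (1 - τ) + A)
      = A * (1 - τ) ^ p - (1 - τ) ^ (p - 1) * (τ ^ (1 - p) - 1) := by
        rw [rpow_sub_one h1τ.ne']; field_simp; ring
    _ ≤ A * L ^ p - (p - 1) * L ^ p := by gcongr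
    _ = (A - (p - 1)) * L ^ p := by ring
end

section
/- Let p > 1 and let v : ℝ² → ℝ take positive values; write V(a,b) = |a-b|^{p-2}(a-b). Then for all positive reals a, b (playing the role of v(x), v(y)) and all nonnegative reals φ₁, φ₂: V(a,b)·[(a/b)^{p-1}·φ₁ - (b/a)^{p-1}·φ₂] ≥ V(a,b)·(φ₁ - φ₂). -/
theorem stmt_16 (p : ℝ) (hp : 1 < p) (a b : ℝ) (ha : 0 < a) (hb : 0 < b)
    (φ₁ φ₂ : ℝ) (hφ₁ : 0 ≤ φ₁) (hφ₂ : 0 ≤ φ₂) :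
    (|a - b| ^ (p - 2) * (a - b)) * (φ₁ - φ₂)
      ≤ (|a - b| ^ (p - 2) * (a - b)) *
          ((a / b) ^ (p - 1) * φ₁ - (b / a) ^ (p - 1) * φ₂) := by
  have hp1 : 0 ≤ p - 1 := by linarith
  rcases lt_trichotomy a b with h | h | h
  · -- a < b : V < 0, inner inequality reversed
    have hV : |a - b| ^ (p - 2) * (a - b) ≤ 0 :=
      mul_nonpos_of_nonneg_of_nonpos (Real.rpow_nonneg (abs_nonneg _) _) (by linarith)
    have h1 : (a / b) ^ (p - 1) ≤ 1 := by
      have : a / b ≤ 1 := (div_le_one hb).2 h.le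
      calc (a / b) ^ (p - 1) ≤ 1 ^ (p - 1) :=
            Real.rpow_le_rpow (div_nonneg ha.le hb.le) this hp1
        _ = 1 := Real.one_rpow _
    have h2 : (1 : ℝ) ≤ (b / a) ^ (p - 1) :=
      Real.one_le_rpow ((one_le_div ha).2 h.le) hp1
    have hinner : (a / b) ^ (p - 1) * φ₁ - (b / a) ^ (p - 1) * φ₂ ≤ φ₁ - φ₂ := by
      nlinarith [mul_le_mul_of_nonneg_right h1 hφ₁, mul_le_mul_of_nonneg_right h2 hφ₂]
    exact mul_le_mul_of_nonpos_left hinner hV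
  · simp [h]
  · -- a > b : V ≥ 0
    have hV : 0 ≤ |a - b| ^ (p - 2) * (a - b) :=
      mul_nonneg (Real.rpow_nonneg (abs_nonneg _) _) (by linarith)
    have h1 : (1 : ℝ) ≤ (a / b) ^ (p - 1) :=
      Real.one_le_rpow ((one_le_div hb).2 h.le) hp1
    have h2 : (b / a) ^ (p - 1) ≤ 1 := by
      have : b / a ≤ 1 := (div_le_one ha).2 h.le
      calc (b / a) ^ (p - 1) ≤ 1 ^ (p - 1) :=
            Real.rpow_le_rpow (div_nonneg hb.le ha.le) this hp1
        _ = 1 := Real.one_rpow _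
    have hinner : φ₁ - φ₂ ≤ (a / b) ^ (p - 1) * φ₁ - (b / a) ^ (p - 1) * φ₂ := by
      nlinarith [mul_le_mul_of_nonneg_right h1 hφ₁, mul_le_mul_of_nonneg_right h2 hφ₂]
    exact mul_le_mul_of_nonneg_left hinner hV
end
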